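/- Let $h \in L^2(\nu_k)$ with $\|h\|_{L^2(\nu_k)} = 1$, and for each $j \geq 1$ let $B_j$ be a closed ball of positive $\nu_k$-measure contained in the annulus $C_j = \{x \in \mathbb{R}^d : 4^{-(j+1)/(2\gamma+d)} \leq \|x\| \leq 4^{-j/(2\gamma+d)}\}$. Let $a_j = (\nu_k(B_j))^{-1/2}(h - \mathrm{Avg}_{B_j} h)\chi_{B_j}$, where $\mathrm{Avg}_{B_j} h = \frac{1}{\nu_k(B_j)}\int_{B_j} h\, d\nu_k$. Then each $a_j$ is an $L^2_k$-atom, the series $f = \sum_{j=1}^\infty (\nu_k(B_j))^{1/2} a_j$ converges in $L^1(\nu_k) \cap L^2(\nu_k)$, $f \in H^1_k(\mathbb{R}^d)$, and $\|f\|_{H^1_k} \leq \sum_{j=1}^\infty (\nu_k(B_j))^{1/2} \leq \sqrt{\frac{d_k}{2\gamma+d}}$. -/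

import Mathlib

/-!
The balls `B_j` lie in the annuli `C_j`, which overlap only along spheres (null sets), so the
functions `λ_j a_j = (h - Avg_{B_j} h) χ_{B_j}` have a.e. disjoint supports. Hence
`‖∑_{j ≥ N} λ_j a_j‖_p ^ p = ∑_{j ≥ N} ‖λ_j a_j‖_p ^ p` for `p = 1, 2`, and both tails vanish:
for `p = 1` because an `L²_k`-atom has `L¹`-norm at most `1` and `∑ λ_j < ∞`, for `p = 2`
because subtracting the mean does not increase the `L²(B_j)`-norm, so the whole sum is at most
`‖h‖₂² = 1`. Summability of `λ_j` comes from homogeneity: `w_k` has degree `2γ`, so polar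
coordinates give `ν_k(B(0, R)) = d_k R^{2γ+d} / (2γ+d)`, and `B_j ⊆ B(0, 4^{-j/(2γ+d)})`
yields `λ_j ≤ √(d_k/(2γ+d)) 2^{-j}`, a geometric series summing to `√(d_k/(2γ+d))`.
-/

open MeasureTheory Metric Filter Topology Set

noncomputable section

/-- The Dunkl weight function. -/
def dunklWeight {d : ℕ} (Rp : Finset (EuclideanSpace ℝ (Fin d)))
    (k : EuclideanSpace ℝ (Fin d) → ℝ) (x : EuclideanSpace ℝ (Fin d)) : ℝ :=
  ∏ ξ ∈ Rp, |(inner ℝ ξ x : ℝ)| ^ (2 * k ξ)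

/-- The weighted measure `ν_k`. -/
def dunklMeasure {d : ℕ} (Rp : Finset (EuclideanSpace ℝ (Fin d)))
    (k : EuclideanSpace ℝ (Fin d) → ℝ) : Measure (EuclideanSpace ℝ (Fin d)) :=
  volume.withDensity fun x => ENNReal.ofReal (dunklWeight Rp k x)

/-- The constant `d_k = ∫_{S^{d-1}} w_k dσ`, where `σ` is the surface measure on the unit
sphere, normalized so that the polar integration formula
`∫ f dx = ∫_0^∞ ∫_{S^{d-1}} f(ry) dσ(y) r^{d-1} dr` holds. -/
def dunklDk {d : ℕ} (Rp : Finset (EuclideanSpace ℝ (Fin d)))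
    (k : EuclideanSpace ℝ (Fin d) → ℝ) : ℝ :=
  ∫ y : sphere (0 : EuclideanSpace ℝ (Fin d)) 1, dunklWeight Rp k ↑y
    ∂((volume : Measure (EuclideanSpace ℝ (Fin d))).toSphere)

/-- The index `γ = ∑_{ξ ∈ R₊} k(ξ)`. -/
def dunklGamma {d : ℕ} (Rp : Finset (EuclideanSpace ℝ (Fin d)))
    (k : EuclideanSpace ℝ (Fin d) → ℝ) : ℝ :=
  ∑ ξ ∈ Rp, k ξ

/-- An `L²_k`-atom supported in the closed ball of center `x₀` and radius `r`. -/
def IsL2Atom {d : ℕ} (ν : Measure (EuclideanSpace ℝ (Fin d)))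
    (a : EuclideanSpace ℝ (Fin d) → ℝ) (x₀ : EuclideanSpace ℝ (Fin d)) (r : ℝ) : Prop :=
  MemLp a 2 ν ∧ Function.support a ⊆ closedBall x₀ r ∧
    (∫ x, |a x| ^ 2 ∂ν) ^ ((1 : ℝ)/2) ≤ (ν (closedBall x₀ r)).toReal ^ (-(1 : ℝ)/2) ∧
    ∫ x in closedBall x₀ r, a x ∂ν = 0

/-- `f = ∑_j λ_j a_j` is an atomic decomposition with `L²_k`-atoms,
the series converging in `L¹(ν_k)` and in `L²(ν_k)`, and `∑_j |λ_j| < ∞`. -/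
def IsAtomicDecomp {d : ℕ} (ν : Measure (EuclideanSpace ℝ (Fin d)))
    (f : EuclideanSpace ℝ (Fin d) → ℝ) (lam : ℕ → ℝ)
    (a : ℕ → EuclideanSpace ℝ (Fin d) → ℝ) : Prop :=
  (∀ j, ∃ (x₀ : EuclideanSpace ℝ (Fin d)) (r : ℝ), 0 < r ∧ IsL2Atom ν (a j) x₀ r) ∧
    Summable (fun j => |lam j|) ∧
    Tendsto (fun N => eLpNorm (fun x => f x - ∑ j ∈ Finset.range N, lam j * a j x) 1 ν)
      atTop (nhds 0) ∧
    Tendsto (fun N => eLpNorm (fun x => f x - ∑ j ∈ Finset.range N, lam j * a j x) 2 ν)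
      atTop (nhds 0)

/-- `f` belongs to the atomic Hardy space `H¹_k`. -/
def MemH1 {d : ℕ} (ν : Measure (EuclideanSpace ℝ (Fin d)))
    (f : EuclideanSpace ℝ (Fin d) → ℝ) : Prop :=
  MemLp f 1 ν ∧ MemLp f 2 ν ∧ ∃ lam a, IsAtomicDecomp ν f lam a

/-- The atomic `H¹_k` norm: infimum of `∑_j |λ_j|` over all atomic decompositions. -/
def H1norm {d : ℕ} (ν : Measure (EuclideanSpace ℝ (Fin d)))
    (f : EuclideanSpace ℝ (Fin d) → ℝ) : ℝ :=
  sInf {s : ℝ | ∃ lam a, IsAtomicDecomp ν f lam a ∧ s = ∑' j, |lam j|}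

open scoped ENNReal
open Function

section MeanOscillation

variable {α : Type*} [MeasurableSpace α] {μ : Measure α} {h : α → ℝ}

theorem MeasureTheory.MemLp.eLpNorm_two_eq_ofReal {u : α → ℝ} (hu : MemLp u 2 μ) :
    eLpNorm u 2 μ = ENNReal.ofReal ((∫ x, |u x| ^ 2 ∂μ) ^ ((1 : ℝ) / 2)) := by
  rw [hu.eLpNorm_eq_integral_rpow_norm two_ne_zero ENNReal.ofNat_ne_top]
  norm_num [Real.norm_eq_abs]

theorem integral_sq_sub_average_le [IsFiniteMeasure μ] (hh : MemLp h 2 μ) :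
    ∫ x, (h x - ⨍ y, h y ∂μ) ^ 2 ∂μ ≤ ∫ x, h x ^ 2 ∂μ := by
  set m := ⨍ y, h y ∂μ
  have hint : Integrable h μ := hh.integrable one_le_two
  have hlin : Integrable (fun x => 2 * h x * m) μ := (hint.const_mul 2).mul_const m
  have hmean : ∫ x, h x ∂μ = μ.real univ * m := (measure_smul_average μ h).symm
  have hexpand : ∫ x, (h x - m) ^ 2 ∂μ = ∫ x, h x ^ 2 ∂μ - μ.real univ * m ^ 2 := by
    simp_rw [sub_sq]
    rw [integral_add (f := fun x => h x ^ 2 - 2 * h x * m) (hh.integrable_sq.sub hlin)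
        (integrable_const _), integral_sub hh.integrable_sq hlin, integral_mul_const,
      integral_const_mul, integral_const, hmean, smul_eq_mul]
    ring
  nlinarith [measureReal_nonneg (μ := μ) (s := univ), sq_nonneg m]

theorem eLpNorm_sub_average_le [IsFiniteMeasure μ] (hh : MemLp h 2 μ) :
    eLpNorm (fun x => h x - ⨍ y, h y ∂μ) 2 μ ≤ eLpNorm h 2 μ := by
  have hsub : MemLp (fun x => h x - ⨍ y, h y ∂μ) 2 μ := hh.sub (memLp_const _)
  rw [hsub.eLpNorm_two_eq_ofReal, hh.eLpNorm_two_eq_ofReal]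
  simp only [sq_abs]
  exact ENNReal.ofReal_le_ofReal (Real.rpow_le_rpow (integral_nonneg fun _ => sq_nonneg _)
    (integral_sq_sub_average_le hh) (by norm_num))

theorem eLpNorm_indicator_sub_setAverage_le {B : Set α} (hB : MeasurableSet B)
    (hfin : μ B ≠ ∞) (hh : MemLp h 2 μ) :
    eLpNorm (B.indicator fun x => h x - ⨍ y in B, h y ∂μ) 2 μ ≤ eLpNorm (B.indicator h) 2 μ := by
  have : Fact (μ B < ∞) := ⟨hfin.lt_top⟩
  rw [eLpNorm_indicator_eq_eLpNorm_restrict hB, eLpNorm_indicator_eq_eLpNorm_restrict hB]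
  exact eLpNorm_sub_average_le (hh.restrict B)

end MeanOscillation

section Supports

variable {α M : Type*} [MeasurableSpace α] {ν : Measure α} [Zero M]

theorem exists_forall_ne_eq_zero_of_support_subsingleton {β : Type*} [Nonempty β] {f : β → M}
    (hf : (support f).Subsingleton) : ∃ j, ∀ i ≠ j, f i = 0 := by
  rcases hf.eq_empty_or_singleton with h | ⟨j, hj⟩
  · exact ⟨Classical.arbitrary β, fun i _ => congrFun (support_eq_empty_iff.1 h) i⟩
  · exact ⟨j, fun i hi => notMem_support.1 fun hmem => hi (mem_singleton_iff.1 (hj ▸ hmem))⟩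

theorem ae_support_subsingleton_of_pairwise_aedisjoint {g : ℕ → α → M} {s : ℕ → Set α}
    (hdisj : Pairwise (AEDisjoint ν on s)) (hsupp : ∀ j, support (g j) ⊆ s j) :
    ∀ᵐ x ∂ν, (support fun j => g j x).Subsingleton := by
  have hae : ∀ᵐ x ∂ν, ∀ i j, i ≠ j → x ∉ s i ∩ s j := by
    refine ae_all_iff.2 fun i => ae_all_iff.2 fun j => ?_
    by_cases hij : i = j
    · exact ae_of_all _ fun _ h => absurd hij h
    · filter_upwards [measure_eq_zero_iff_ae_notMem.1 (hdisj hij)] with x hx _ using hx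
  filter_upwards [hae] with x hx i hi j hj
  by_contra hij
  exact hx i j hij ⟨hsupp i hi, hsupp j hj⟩

end Supports

section DisjointSupports

variable {α E : Type*} [MeasurableSpace α] {ν : Measure α} [NormedAddCommGroup E]
  {g : ℕ → α → E} {p : ℝ≥0∞}

theorem eLpNorm_rpow_toReal_eq_lintegral (hp0 : p ≠ 0) (hp : p ≠ ∞) (f : α → E) :
    eLpNorm f p ν ^ p.toReal = ∫⁻ x, ‖f x‖ₑ ^ p.toReal ∂ν := by
  rw [eLpNorm_eq_eLpNorm' hp0 hp,
    lintegral_rpow_enorm_eq_rpow_eLpNorm' (ENNReal.toReal_pos hp0 hp)]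

theorem eLpNorm_tsum_rpow (hg : ∀ᵐ x ∂ν, (support fun j => g j x).Subsingleton)
    (hmeas : ∀ j, AEStronglyMeasurable (g j) ν) (hp0 : p ≠ 0) (hp : p ≠ ∞) :
    eLpNorm (fun x => ∑' j, g j x) p ν ^ p.toReal = ∑' j, eLpNorm (g j) p ν ^ p.toReal := by
  have hq : 0 < p.toReal := ENNReal.toReal_pos hp0 hp
  simp only [eLpNorm_rpow_toReal_eq_lintegral hp0 hp]
  rw [← lintegral_tsum fun j => (hmeas j).enorm.pow_const _]
  refine lintegral_congr_ae (hg.mono fun x hx => ?_)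
  obtain ⟨j, hj⟩ := exists_forall_ne_eq_zero_of_support_subsingleton hx
  dsimp only
  rw [tsum_eq_single j hj, tsum_eq_single j fun i hi => by simp [hj i hi, hq]]

theorem memLp_tsum (hg : ∀ᵐ x ∂ν, (support fun j => g j x).Subsingleton)
    (hmeas : ∀ j, AEStronglyMeasurable (g j) ν) (hp0 : p ≠ 0) (hp : p ≠ ∞)
    (hsum : ∑' j, eLpNorm (g j) p ν ^ p.toReal ≠ ∞) :
    MemLp (fun x => ∑' j, g j x) p ν := by
  refine ⟨aestronglyMeasurable_of_tendsto_ae atTop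
    (f := fun N x => ∑ j ∈ Finset.range N, g j x)
    (fun N => Finset.aestronglyMeasurable_fun_sum _ fun j _ => hmeas j) ?_, ?_⟩
  · filter_upwards [hg] with x hx
    exact (summable_of_hasFiniteSupport hx.finite).hasSum.tendsto_sum_nat
  · refine lt_top_iff_ne_top.2 fun htop => hsum ?_
    rw [← eLpNorm_tsum_rpow hg hmeas hp0 hp, htop,
      ENNReal.top_rpow_of_pos (ENNReal.toReal_pos hp0 hp)]

theorem tendsto_eLpNorm_tsum_sub_sum (hg : ∀ᵐ x ∂ν, (support fun j => g j x).Subsingleton)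
    (hmeas : ∀ j, AEStronglyMeasurable (g j) ν) (hp0 : p ≠ 0) (hp : p ≠ ∞)
    (hsum : ∑' j, eLpNorm (g j) p ν ^ p.toReal ≠ ∞) :
    Tendsto (fun N => eLpNorm (fun x => ∑' j, g j x - ∑ j ∈ Finset.range N, g j x) p ν)
      atTop (𝓝 0) := by
  have hq : 0 < p.toReal := ENNReal.toReal_pos hp0 hp
  have htail N : eLpNorm (fun x => ∑' j, g j x - ∑ j ∈ Finset.range N, g j x) p ν =
      (∑' i, eLpNorm (g (i + N)) p ν ^ p.toReal) ^ (1 / p.toReal) := by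
    have hgN : ∀ᵐ x ∂ν, (support fun i => g (i + N) x).Subsingleton :=
      hg.mono fun x hx => hx.preimage (add_left_injective N)
    rw [← eLpNorm_tsum_rpow hgN (fun i => hmeas _) hp0 hp, ← ENNReal.rpow_mul,
      mul_one_div_cancel hq.ne', ENNReal.rpow_one]
    refine eLpNorm_congr_ae (hg.mono fun x hx => ?_)
    dsimp only
    rw [← (summable_of_hasFiniteSupport hx.finite).sum_add_tsum_nat_add N, add_sub_cancel_left]
  simp_rw [htail]
  have hrpow : Tendsto (fun z : ℝ≥0∞ => z ^ (1 / p.toReal)) (𝓝 0) (𝓝 0) := by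
    simpa [hq] using (ENNReal.continuous_rpow_const (y := 1 / p.toReal)).tendsto 0
  exact hrpow.comp (ENNReal.tendsto_sum_nat_add _ hsum)

theorem tsum_eLpNorm_indicator_rpow_le {s : ℕ → Set α} (hs : ∀ j, MeasurableSet (s j))
    (hdisj : Pairwise (AEDisjoint ν on s)) {h : α → E} (hh : AEStronglyMeasurable h ν)
    (hp0 : p ≠ 0) (hp : p ≠ ∞) :
    ∑' j, eLpNorm ((s j).indicator h) p ν ^ p.toReal ≤ eLpNorm h p ν ^ p.toReal := by
  have hsupp := ae_support_subsingleton_of_pairwise_aedisjoint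
    (g := fun j => (s j).indicator h) hdisj fun j => support_indicator_subset
  rw [← eLpNorm_tsum_rpow hsupp (fun j => hh.indicator (hs j)) hp0 hp]
  refine ENNReal.rpow_le_rpow (eLpNorm_mono_ae (hsupp.mono fun x hx => ?_))
    ENNReal.toReal_nonneg
  obtain ⟨j, hj⟩ := exists_forall_ne_eq_zero_of_support_subsingleton hx
  rw [tsum_eq_single j hj]
  exact norm_indicator_le_norm_self h x

end DisjointSupports

theorem tsum_eLpNorm_indicator_sub_setAverage_sq_le {α : Type*} [MeasurableSpace α]
    {μ : Measure α} {h : α → ℝ} {B : ℕ → Set α} (hB : ∀ j, MeasurableSet (B j))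
    (hfin : ∀ j, μ (B j) ≠ ∞) (hdisj : Pairwise (AEDisjoint μ on B)) (hh : MemLp h 2 μ) :
    ∑' j, eLpNorm ((B j).indicator fun x => h x - ⨍ y in B j, h y ∂μ) 2 μ ^ (2 : ℝ≥0∞).toReal ≤
      eLpNorm h 2 μ ^ (2 : ℝ≥0∞).toReal :=
  (ENNReal.tsum_le_tsum fun j => ENNReal.rpow_le_rpow
    (eLpNorm_indicator_sub_setAverage_le (hB j) (hfin j) hh) ENNReal.toReal_nonneg).trans
    (tsum_eLpNorm_indicator_rpow_le hB hdisj hh.1 two_ne_zero ENNReal.ofNat_ne_top)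

section Atoms

variable {d : ℕ}

def oscillationAtom (ν : Measure (EuclideanSpace ℝ (Fin d))) (h : EuclideanSpace ℝ (Fin d) → ℝ)
    (x₀ : EuclideanSpace ℝ (Fin d)) (r : ℝ) : EuclideanSpace ℝ (Fin d) → ℝ :=
  (closedBall x₀ r).indicator fun x =>
    (ν (closedBall x₀ r)).toReal ^ (-(1 : ℝ)/2) * (h x - ⨍ y in closedBall x₀ r, h y ∂ν)

variable {ν : Measure (EuclideanSpace ℝ (Fin d))} {x₀ : EuclideanSpace ℝ (Fin d)} {r : ℝ}
  {h : EuclideanSpace ℝ (Fin d) → ℝ}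

theorem isL2Atom_oscillationAtom (hh : MemLp h 2 ν) (hnorm : eLpNorm h 2 ν ≤ 1)
    (hfin : ν (closedBall x₀ r) ≠ ∞) : IsL2Atom ν (oscillationAtom ν h x₀ r) x₀ r := by
  set B := closedBall x₀ r
  set C := (ν B).toReal ^ (-(1 : ℝ)/2)
  have hC : 0 ≤ C := Real.rpow_nonneg ENNReal.toReal_nonneg _
  have hB : MeasurableSet B := measurableSet_closedBall
  have : Fact (ν B < ∞) := ⟨hfin.lt_top⟩
  set g := B.indicator fun x => h x - ⨍ y in B, h y ∂ν
  have hag : oscillationAtom ν h x₀ r = C • g := funext fun x => indicator_const_mul B _ C x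
  have hg : MemLp g 2 ν :=
    (memLp_indicator_iff_restrict hB).2 ((hh.restrict B).sub (memLp_const _))
  have hg1 : eLpNorm g 2 ν ≤ 1 :=
    (eLpNorm_indicator_sub_setAverage_le hB hfin hh).trans ((eLpNorm_indicator_le h).trans hnorm)
  rw [hag]
  refine ⟨hg.const_smul C, (support_const_smul_subset C g).trans support_indicator_subset,
    ?_, ?_⟩
  · rw [← ENNReal.ofReal_le_ofReal_iff hC, ← (hg.const_smul C).eLpNorm_two_eq_ofReal,
      eLpNorm_const_smul, Real.enorm_of_nonneg hC]
    simpa using mul_le_mul_right hg1 (ENNReal.ofReal C)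
  · simp only [Pi.smul_apply, smul_eq_mul, g]
    rw [integral_const_mul, setIntegral_indicator hB, inter_self, setAverage_sub_setAverage hfin,
      mul_zero]

theorem rpow_half_mul_oscillationAtom (hfin : ν (closedBall x₀ r) ≠ ∞)
    (hpos : 0 < ν (closedBall x₀ r)) (x : EuclideanSpace ℝ (Fin d)) :
    (ν (closedBall x₀ r)).toReal ^ ((1 : ℝ)/2) * oscillationAtom ν h x₀ r x =
      (closedBall x₀ r).indicator (fun x => h x - ⨍ y in closedBall x₀ r, h y ∂ν) x := by
  have ht : 0 < (ν (closedBall x₀ r)).toReal := ENNReal.toReal_pos hpos.ne' hfin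
  rw [oscillationAtom, ← indicator_const_mul]
  congr 1
  ext y
  rw [← mul_assoc, ← Real.rpow_add ht]
  norm_num

theorem IsL2Atom.eLpNorm_one_le_one {a : EuclideanSpace ℝ (Fin d) → ℝ} (ha : IsL2Atom ν a x₀ r)
    (hfin : ν (closedBall x₀ r) ≠ ∞) (hpos : 0 < ν (closedBall x₀ r)) : eLpNorm a 1 ν ≤ 1 := by
  set B := closedBall x₀ r
  set t := (ν B).toReal
  have ht : 0 < t := ENNReal.toReal_pos hpos.ne' hfin
  have hexp : 1 / (1 : ℝ≥0∞).toReal - 1 / (2 : ℝ≥0∞).toReal = (1 : ℝ)/2 := by norm_num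
  have h2 : eLpNorm a 2 ν ≤ ENNReal.ofReal (t ^ (-(1 : ℝ)/2)) := by
    rw [ha.1.eLpNorm_two_eq_ofReal]
    exact ENNReal.ofReal_le_ofReal ha.2.2.1
  calc eLpNorm a 1 ν = eLpNorm a 1 (ν.restrict B) := by
        rw [← eLpNorm_indicator_eq_eLpNorm_restrict measurableSet_closedBall,
          indicator_eq_self.2 ha.2.1]
    _ ≤ eLpNorm a 2 (ν.restrict B) *
          ν.restrict B univ ^ (1 / (1 : ℝ≥0∞).toReal - 1 / (2 : ℝ≥0∞).toReal) :=
        eLpNorm_le_eLpNorm_mul_rpow_measure_univ one_le_two ha.1.1.restrict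
    _ ≤ ENNReal.ofReal (t ^ (-(1 : ℝ)/2)) * ENNReal.ofReal (t ^ ((1 : ℝ)/2)) := by
        rw [Measure.restrict_apply_univ, hexp, ← ENNReal.ofReal_toReal hfin,
          ENNReal.ofReal_rpow_of_pos ht]
        gcongr
        exact (eLpNorm_restrict_le _ _ _ _).trans h2
    _ = 1 := by rw [← ENNReal.ofReal_mul (by positivity), ← Real.rpow_add ht]; norm_num

end Atoms

section AtomicSeries

variable {d : ℕ} {ν : Measure (EuclideanSpace ℝ (Fin d))} {c : ℕ → EuclideanSpace ℝ (Fin d)}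
  {r : ℕ → ℝ} {a : ℕ → EuclideanSpace ℝ (Fin d) → ℝ} {lam : ℕ → ℝ}

theorem ae_support_subsingleton_of_atoms (hatom : ∀ j, IsL2Atom ν (a j) (c j) (r j))
    (hdisj : Pairwise (AEDisjoint ν on fun j => closedBall (c j) (r j))) :
    ∀ᵐ x ∂ν, (support fun j => lam j * a j x).Subsingleton :=
  ae_support_subsingleton_of_pairwise_aedisjoint hdisj fun j =>
    (support_mul_subset_right _ _).trans (hatom j).2.1

theorem tsum_eLpNorm_one_mul_atom_ne_top (hatom : ∀ j, IsL2Atom ν (a j) (c j) (r j))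
    (hfin : ∀ j, ν (closedBall (c j) (r j)) ≠ ∞) (hpos : ∀ j, 0 < ν (closedBall (c j) (r j)))
    (hlam : Summable fun j => |lam j|) :
    ∑' j, eLpNorm (fun x => lam j * a j x) 1 ν ^ (1 : ℝ≥0∞).toReal ≠ ∞ := by
  refine ne_top_of_le_ne_top (b := ∑' j, ‖lam j‖ₑ) ?_ (ENNReal.tsum_le_tsum fun j => ?_)
  · exact ENNReal.tsum_coe_ne_top_iff_summable.2 (NNReal.summable_coe.1 (by simpa using hlam))
  · rw [ENNReal.toReal_one, ENNReal.rpow_one]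
    calc eLpNorm (lam j • a j) 1 ν = ‖lam j‖ₑ * eLpNorm (a j) 1 ν := eLpNorm_const_smul _ _ _ _
      _ ≤ ‖lam j‖ₑ := mul_le_of_le_one_right' ((hatom j).eLpNorm_one_le_one (hfin j) (hpos j))

theorem isAtomicDecomp_tsum (hatom : ∀ j, IsL2Atom ν (a j) (c j) (r j)) (hr : ∀ j, 0 < r j)
    (hfin : ∀ j, ν (closedBall (c j) (r j)) ≠ ∞) (hpos : ∀ j, 0 < ν (closedBall (c j) (r j)))
    (hlam : Summable fun j => |lam j|)
    (hdisj : Pairwise (AEDisjoint ν on fun j => closedBall (c j) (r j)))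
    (hL2 : ∑' j, eLpNorm (fun x => lam j * a j x) 2 ν ^ (2 : ℝ≥0∞).toReal ≠ ∞) :
    IsAtomicDecomp ν (fun x => ∑' j, lam j * a j x) lam a := by
  have hmeas j : AEStronglyMeasurable (fun x => lam j * a j x) ν := (hatom j).1.1.const_mul _
  refine ⟨fun j => ⟨c j, r j, hr j, hatom j⟩, hlam, ?_, ?_⟩
  · exact tendsto_eLpNorm_tsum_sub_sum (ae_support_subsingleton_of_atoms hatom hdisj) hmeas
      one_ne_zero ENNReal.one_ne_top (tsum_eLpNorm_one_mul_atom_ne_top hatom hfin hpos hlam)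
  · exact tendsto_eLpNorm_tsum_sub_sum (ae_support_subsingleton_of_atoms hatom hdisj) hmeas
      two_ne_zero ENNReal.ofNat_ne_top hL2

theorem memH1_tsum (hatom : ∀ j, IsL2Atom ν (a j) (c j) (r j)) (hr : ∀ j, 0 < r j)
    (hfin : ∀ j, ν (closedBall (c j) (r j)) ≠ ∞) (hpos : ∀ j, 0 < ν (closedBall (c j) (r j)))
    (hlam : Summable fun j => |lam j|)
    (hdisj : Pairwise (AEDisjoint ν on fun j => closedBall (c j) (r j)))
    (hL2 : ∑' j, eLpNorm (fun x => lam j * a j x) 2 ν ^ (2 : ℝ≥0∞).toReal ≠ ∞) :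
    MemH1 ν fun x => ∑' j, lam j * a j x := by
  have hmeas j : AEStronglyMeasurable (fun x => lam j * a j x) ν := (hatom j).1.1.const_mul _
  refine ⟨?_, ?_, lam, a, isAtomicDecomp_tsum hatom hr hfin hpos hlam hdisj hL2⟩
  · exact memLp_tsum (ae_support_subsingleton_of_atoms hatom hdisj) hmeas one_ne_zero
      ENNReal.one_ne_top (tsum_eLpNorm_one_mul_atom_ne_top hatom hfin hpos hlam)
  · exact memLp_tsum (ae_support_subsingleton_of_atoms hatom hdisj) hmeas two_ne_zero
      ENNReal.ofNat_ne_top hL2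

theorem H1norm_le_tsum_abs {f : EuclideanSpace ℝ (Fin d) → ℝ} (h : IsAtomicDecomp ν f lam a) :
    H1norm ν f ≤ ∑' j, |lam j| := by
  refine csInf_le ⟨0, ?_⟩ ⟨lam, a, h, rfl⟩
  rintro _ ⟨lam', a', _, rfl⟩
  exact tsum_nonneg fun j => abs_nonneg _

end AtomicSeries

theorem pairwise_aedisjoint_of_subset_annuli {E : Type*} [NormedAddCommGroup E]
    [MeasurableSpace E] {μ : Measure E} (hμ : ∀ R, μ (sphere 0 R) = 0) {ρ : ℝ → ℝ}
    (hρ : Antitone ρ) {B : ℕ → Set E}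
    (hB : ∀ j : ℕ, B j ⊆ {x | ρ (j + 2) ≤ ‖x‖ ∧ ‖x‖ ≤ ρ (j + 1)}) :
    Pairwise (AEDisjoint μ on B) := by
  intro i j hij
  wlog hlt : i < j generalizing i j
  · exact (this hij.symm (hij.lt_or_gt.resolve_left hlt)).symm
  have hρij : ρ (j + 1) ≤ ρ (i + 2) := hρ (by norm_cast; omega)
  refine measure_mono_null (fun x hx => ?_) (hμ (ρ (i + 2)))
  exact mem_sphere_zero_iff_norm.2
    (le_antisymm ((hB j hx.2).2.trans hρij) (hB i hx.1).1)

section Polar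

variable {E : Type*} [NormedAddCommGroup E] [NormedSpace ℝ E] [FiniteDimensional ℝ E]
  [MeasurableSpace E] [BorelSpace E] [Nontrivial E] (μ : Measure E) [μ.IsAddHaarMeasure]

theorem lintegral_indicator_Iic_rpow_volumeIoiPow (n : ℕ) {s R : ℝ} (hs : -1 < s + n)
    (hR : 0 < R) :
    ∫⁻ t, (Iic R).indicator (fun t : ℝ => ENNReal.ofReal (t ^ s)) (t : ℝ)
        ∂(Measure.volumeIoiPow n) = ENNReal.ofReal (R ^ (s + n + 1) / (s + n + 1)) := by
  have hmeas : Measurable fun t : Ioi (0 : ℝ) =>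
      (Iic R).indicator (fun t : ℝ => ENNReal.ofReal (t ^ s)) (t : ℝ) :=
    ((by fun_prop : Measurable fun t : ℝ => ENNReal.ofReal (t ^ s)).indicator
      measurableSet_Iic).comp measurable_subtype_coe
  have hpow : ∀ t ∈ Ioi (0 : ℝ), ENNReal.ofReal (t ^ n) *
      (Iic R).indicator (fun t : ℝ => ENNReal.ofReal (t ^ s)) t =
        (Iic R).indicator (fun t => ENNReal.ofReal (t ^ (s + n))) t := by
    intro t ht
    by_cases htR : t ∈ Iic R
    · rw [indicator_of_mem htR, indicator_of_mem htR,
        ← ENNReal.ofReal_mul (pow_nonneg (le_of_lt ht) n), Real.rpow_add ht, Real.rpow_natCast,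
        mul_comm]
    · rw [indicator_of_notMem htR, indicator_of_notMem htR, mul_zero]
  rw [Measure.volumeIoiPow, lintegral_withDensity_eq_lintegral_mul _ (by fun_prop) hmeas]
  simp only [Pi.mul_apply]
  rw [lintegral_subtype_comap measurableSet_Ioi (fun t => ENNReal.ofReal (t ^ n) *
      (Iic R).indicator (fun t : ℝ => ENNReal.ofReal (t ^ s)) t),
    setLIntegral_congr_fun measurableSet_Ioi hpow, lintegral_indicator measurableSet_Iic,
    Measure.restrict_restrict measurableSet_Iic, Iic_inter_Ioi,
    ← ofReal_integral_eq_lintegral_ofReal (intervalIntegral.intervalIntegrable_rpow' hs).1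
      ((ae_restrict_mem measurableSet_Ioc).mono fun t ht => Real.rpow_nonneg ht.1.le _),
    ← intervalIntegral.integral_of_le hR.le, integral_rpow (Or.inl hs),
    Real.zero_rpow (by linarith), sub_zero]

theorem lintegral_eq_lintegral_toSphere_prod {f : E → ℝ≥0∞} (hf : Measurable f) :
    ∫⁻ x, f x ∂μ = ∫⁻ z : sphere (0 : E) 1 × Ioi (0 : ℝ), f ((z.2 : ℝ) • (z.1 : E))
      ∂(μ.toSphere.prod (Measure.volumeIoiPow (Module.finrank ℝ E - 1))) := by
  have hF : Measurable fun z : sphere (0 : E) 1 × Ioi (0 : ℝ) => f ((z.2 : ℝ) • (z.1 : E)) :=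
    hf.comp (by fun_prop)
  calc ∫⁻ x, f x ∂μ = ∫⁻ x in {0}ᶜ, f x ∂μ := by rw [restrict_compl_singleton]
    _ = ∫⁻ x : ({0}ᶜ : Set E), f x ∂(μ.comap (↑)) :=
        (lintegral_subtype_comap (measurableSet_singleton 0).compl _).symm
    _ = ∫⁻ x : ({0}ᶜ : Set E), f ((homeomorphUnitSphereProd E x).2.1 •
          ((homeomorphUnitSphereProd E x).1 : E)) ∂(μ.comap (↑)) := by
        refine lintegral_congr fun x => ?_
        simp [smul_inv_smul₀ (norm_ne_zero_iff.2 x.2)]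
    _ = _ := (μ.measurePreserving_homeomorphUnitSphereProd).lintegral_comp hF

theorem lintegral_closedBall_of_homogeneous {w : E → ℝ≥0∞} (hw : Measurable w) {s : ℝ}
    (hs : 0 < s + Module.finrank ℝ E)
    (hhom : ∀ t : ℝ, 0 < t → ∀ y, w (t • y) = ENNReal.ofReal (t ^ s) * w y) {R : ℝ}
    (hR : 0 < R) :
    ∫⁻ x in closedBall 0 R, w x ∂μ = (∫⁻ y, w y ∂μ.toSphere) *
      ENNReal.ofReal (R ^ (s + Module.finrank ℝ E) / (s + Module.finrank ℝ E)) := by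
  have hn : 0 < Module.finrank ℝ E := Module.finrank_pos
  have hexp : s + ((Module.finrank ℝ E - 1 : ℕ) : ℝ) + 1 = s + Module.finrank ℝ E := by
    rw [Nat.cast_pred hn]; ring
  have hpolar : ∀ z : sphere (0 : E) 1 × Ioi (0 : ℝ),
      (closedBall 0 R).indicator w ((z.2 : ℝ) • (z.1 : E)) =
        w z.1 * (Iic R).indicator (fun t => ENNReal.ofReal (t ^ s)) z.2 := by
    rintro ⟨y, t, ht⟩
    have hmem : t • (y : E) ∈ closedBall 0 R ↔ t ∈ Iic R := by
      simp [norm_smul, abs_of_pos (mem_Ioi.1 ht)]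
    dsimp only
    by_cases htR : t ∈ Iic R
    · rw [indicator_of_mem (hmem.2 htR), indicator_of_mem htR, hhom t ht, mul_comm]
    · rw [indicator_of_notMem (mt hmem.1 htR), indicator_of_notMem htR, mul_zero]
  have hw' : Measurable fun y : sphere (0 : E) 1 => w y := hw.comp measurable_subtype_coe
  have hrad : Measurable fun t : Ioi (0 : ℝ) =>
      (Iic R).indicator (fun t : ℝ => ENNReal.ofReal (t ^ s)) (t : ℝ) :=
    ((by fun_prop : Measurable fun t : ℝ => ENNReal.ofReal (t ^ s)).indicator
      measurableSet_Iic).comp measurable_subtype_coe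
  rw [← lintegral_indicator measurableSet_closedBall,
    lintegral_eq_lintegral_toSphere_prod μ (hw.indicator measurableSet_closedBall),
    lintegral_congr hpolar, lintegral_prod_mul hw'.aemeasurable hrad.aemeasurable,
    lintegral_indicator_Iic_rpow_volumeIoiPow _ (by rw [Nat.cast_pred hn]; linarith) hR, hexp]

end Polar

section Dunkl

variable {d : ℕ} (Rp : Finset (EuclideanSpace ℝ (Fin d))) (k : EuclideanSpace ℝ (Fin d) → ℝ)

theorem dunklWeight_nonneg (x : EuclideanSpace ℝ (Fin d)) : 0 ≤ dunklWeight Rp k x :=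
  Finset.prod_nonneg fun _ _ => Real.rpow_nonneg (abs_nonneg _) _

theorem continuous_dunklWeight (hk : ∀ ξ ∈ Rp, 0 ≤ k ξ) : Continuous (dunklWeight Rp k) :=
  continuous_finsetProd _ fun ξ hξ =>
    (Real.continuous_rpow_const (by linarith [hk ξ hξ])).comp
      (continuous_const.inner continuous_id).abs

theorem dunklWeight_smul {t : ℝ} (ht : 0 < t) (x : EuclideanSpace ℝ (Fin d)) :
    dunklWeight Rp k (t • x) = t ^ (2 * dunklGamma Rp k) * dunklWeight Rp k x := by
  simp only [dunklWeight, dunklGamma, real_inner_smul_right, abs_mul, abs_of_pos ht,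
    Real.mul_rpow ht.le (abs_nonneg _), Finset.prod_mul_distrib, Finset.mul_sum,
    Real.rpow_sum_of_pos ht]

theorem two_mul_dunklGamma_add_pos (hd : 0 < d) (hk : ∀ ξ ∈ Rp, 0 ≤ k ξ) :
    0 < 2 * dunklGamma Rp k + d := by
  have : 0 ≤ dunklGamma Rp k := Finset.sum_nonneg hk
  have : (0 : ℝ) < d := Nat.cast_pos.2 hd
  linarith

theorem isLocallyFiniteMeasure_dunklMeasure (hk : ∀ ξ ∈ Rp, 0 ≤ k ξ) :
    IsLocallyFiniteMeasure (dunklMeasure Rp k) :=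
  IsLocallyFiniteMeasure.withDensity_ofReal (continuous_dunklWeight Rp k hk)

theorem dunklMeasure_sphere (hd : 0 < d) (x : EuclideanSpace ℝ (Fin d)) (R : ℝ) :
    dunklMeasure Rp k (sphere x R) = 0 :=
  have : NeZero d := NeZero.of_pos hd
  withDensity_absolutelyContinuous _ _ (Measure.addHaar_sphere volume x R)

theorem dunklMeasure_closedBall_zero (hd : 0 < d) (hk : ∀ ξ ∈ Rp, 0 ≤ k ξ) {R : ℝ}
    (hR : 0 < R) :
    dunklMeasure Rp k (closedBall 0 R) =
      (∫⁻ y : sphere (0 : EuclideanSpace ℝ (Fin d)) 1,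
          ENNReal.ofReal (dunklWeight Rp k y) ∂volume.toSphere) *
        ENNReal.ofReal (R ^ (2 * dunklGamma Rp k + d) / (2 * dunklGamma Rp k + d)) := by
  have : NeZero d := NeZero.of_pos hd
  have hdim : (Module.finrank ℝ (EuclideanSpace ℝ (Fin d)) : ℝ) = d := by simp
  have hhom (t : ℝ) (ht : 0 < t) (y : EuclideanSpace ℝ (Fin d)) :
      ENNReal.ofReal (dunklWeight Rp k (t • y)) =
        ENNReal.ofReal (t ^ (2 * dunklGamma Rp k)) * ENNReal.ofReal (dunklWeight Rp k y) := by
    rw [dunklWeight_smul Rp k ht, ENNReal.ofReal_mul (Real.rpow_nonneg ht.le _)]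
  rw [dunklMeasure, withDensity_apply _ measurableSet_closedBall,
    lintegral_closedBall_of_homogeneous volume
      (continuous_dunklWeight Rp k hk).measurable.ennreal_ofReal
      (hdim ▸ two_mul_dunklGamma_add_pos Rp k hd hk) hhom hR, hdim]

theorem dunklDk_eq_toReal (hk : ∀ ξ ∈ Rp, 0 ≤ k ξ) :
    dunklDk Rp k = (∫⁻ y : sphere (0 : EuclideanSpace ℝ (Fin d)) 1,
      ENNReal.ofReal (dunklWeight Rp k y) ∂volume.toSphere).toReal :=
  integral_eq_lintegral_of_nonneg_ae (ae_of_all _ fun _ => dunklWeight_nonneg Rp k _)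
    ((continuous_dunklWeight Rp k hk).comp continuous_subtype_val).aestronglyMeasurable

theorem dunklMeasure_toReal_le_of_subset_closedBall (hd : 0 < d) (hk : ∀ ξ ∈ Rp, 0 ≤ k ξ)
    {B : Set (EuclideanSpace ℝ (Fin d))} {R : ℝ} (hR : 0 < R) (hB : B ⊆ closedBall 0 R) :
    (dunklMeasure Rp k B).toReal ≤
      dunklDk Rp k * (R ^ (2 * dunklGamma Rp k + d) / (2 * dunklGamma Rp k + d)) := by
  have : IsLocallyFiniteMeasure (dunklMeasure Rp k) := isLocallyFiniteMeasure_dunklMeasure Rp k hk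
  calc (dunklMeasure Rp k B).toReal ≤ (dunklMeasure Rp k (closedBall 0 R)).toReal :=
        ENNReal.toReal_mono measure_closedBall_lt_top.ne (measure_mono hB)
    _ = _ := by
        rw [dunklMeasure_closedBall_zero Rp k hd hk hR, ENNReal.toReal_mul,
          dunklDk_eq_toReal Rp k hk,
          ENNReal.toReal_ofReal (div_nonneg (by positivity)
            (two_mul_dunklGamma_add_pos Rp k hd hk).le)]

theorem summable_and_tsum_rpow_half_dunklMeasure_le (hd : 0 < d) (hk : ∀ ξ ∈ Rp, 0 ≤ k ξ)
    {B : ℕ → Set (EuclideanSpace ℝ (Fin d))}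
    (hB : ∀ j : ℕ, B j ⊆ closedBall 0 ((4 : ℝ) ^ (-((j : ℝ) + 1) / (2 * dunklGamma Rp k + d)))) :
    Summable (fun j => (dunklMeasure Rp k (B j)).toReal ^ ((1 : ℝ)/2)) ∧
      ∑' j, (dunklMeasure Rp k (B j)).toReal ^ ((1 : ℝ)/2) ≤
        Real.sqrt (dunklDk Rp k / (2 * dunklGamma Rp k + d)) := by
  set D := 2 * dunklGamma Rp k + d
  have hD : 0 < D := two_mul_dunklGamma_add_pos Rp k hd hk
  set C := Real.sqrt (dunklDk Rp k / D)
  have hle (j : ℕ) : (dunklMeasure Rp k (B j)).toReal ^ ((1 : ℝ)/2) ≤ C / 2 / 2 ^ j := by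
    have hRD : ((4 : ℝ) ^ (-((j : ℝ) + 1) / D)) ^ D = ((2 ^ (j + 1)) ^ 2)⁻¹ := by
      rw [← Real.rpow_mul (by norm_num), div_mul_cancel₀ _ hD.ne', Real.rpow_neg (by norm_num),
        ← pow_mul, mul_comm, pow_mul]
      norm_cast
    calc (dunklMeasure Rp k (B j)).toReal ^ ((1 : ℝ)/2)
        ≤ (dunklDk Rp k / D * ((2 ^ (j + 1)) ^ 2)⁻¹) ^ ((1 : ℝ)/2) := by
          refine Real.rpow_le_rpow ENNReal.toReal_nonneg ?_ (by norm_num)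
          have := dunklMeasure_toReal_le_of_subset_closedBall Rp k hd hk (by positivity) (hB j)
          rw [hRD] at this
          exact this.trans_eq (by ring)
      _ = C / 2 / 2 ^ j := by
          rw [← Real.sqrt_eq_rpow, Real.sqrt_mul' _ (by positivity), Real.sqrt_inv,
            Real.sqrt_sq (by positivity), pow_succ]
          ring
  have hnonneg (j : ℕ) : 0 ≤ (dunklMeasure Rp k (B j)).toReal ^ ((1 : ℝ)/2) :=
    Real.rpow_nonneg ENNReal.toReal_nonneg _
  have hsum := Summable.of_nonneg_of_le hnonneg hle (summable_geometric_two' C)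
  exact ⟨hsum, (Summable.tsum_le_tsum hle hsum (summable_geometric_two' C)).trans_eq
    (tsum_geometric_two' C)⟩

theorem pairwise_aedisjoint_dunklMeasure_of_subset_annuli (hd : 0 < d) (hk : ∀ ξ ∈ Rp, 0 ≤ k ξ)
    {B : ℕ → Set (EuclideanSpace ℝ (Fin d))}
    (hB : ∀ j : ℕ, B j ⊆ {x | (4 : ℝ) ^ (-((j : ℝ) + 2) / (2 * dunklGamma Rp k + d)) ≤ ‖x‖ ∧
      ‖x‖ ≤ (4 : ℝ) ^ (-((j : ℝ) + 1) / (2 * dunklGamma Rp k + d))}) :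
    Pairwise (AEDisjoint (dunklMeasure Rp k) on B) :=
  pairwise_aedisjoint_of_subset_annuli (dunklMeasure_sphere Rp k hd 0)
    (ρ := fun t => (4 : ℝ) ^ (-t / (2 * dunklGamma Rp k + d)))
    (fun _ _ hst => Real.rpow_le_rpow_of_exponent_le (by norm_num)
      (div_le_div_of_nonneg_right (neg_le_neg hst) (two_mul_dunklGamma_add_pos Rp k hd hk).le))
    hB

end Dunkl

theorem example_memH1_of_atoms_in_annuli_general {d : ℕ} (hd : 0 < d)
    (Rp : Finset (EuclideanSpace ℝ (Fin d)))
    (k : EuclideanSpace ℝ (Fin d) → ℝ) (hk : ∀ ξ ∈ Rp, 0 ≤ k ξ)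
    (h : EuclideanSpace ℝ (Fin d) → ℝ) (hh : MemLp h 2 (dunklMeasure Rp k))
    (hnorm : eLpNorm h 2 (dunklMeasure Rp k) = 1)
    (c : ℕ → EuclideanSpace ℝ (Fin d)) (r : ℕ → ℝ) (hr : ∀ j, 0 < r j)
    (hpos : ∀ j, 0 < (dunklMeasure Rp k) (closedBall (c j) (r j)))
    (hsub : ∀ j, closedBall (c j) (r j) ⊆
      {x : EuclideanSpace ℝ (Fin d) |
        (4 : ℝ) ^ (-((j : ℝ) + 2) / (2 * dunklGamma Rp k + d)) ≤ ‖x‖ ∧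
          ‖x‖ ≤ (4 : ℝ) ^ (-((j : ℝ) + 1) / (2 * dunklGamma Rp k + d))})
    (a : ℕ → EuclideanSpace ℝ (Fin d) → ℝ)
    (ha : ∀ j, a j = Set.indicator (closedBall (c j) (r j)) fun x =>
      ((dunklMeasure Rp k) (closedBall (c j) (r j))).toReal ^ (-(1 : ℝ)/2)
        * (h x - ((dunklMeasure Rp k) (closedBall (c j) (r j))).toReal⁻¹
            * ∫ y in closedBall (c j) (r j), h y ∂(dunklMeasure Rp k)))
    (lam : ℕ → ℝ)
    (hlam : ∀ j, lam j = ((dunklMeasure Rp k) (closedBall (c j) (r j))).toReal ^ ((1 : ℝ)/2))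
    (f : EuclideanSpace ℝ (Fin d) → ℝ)
    (hf : ∀ x, f x = ∑' j, lam j * a j x) :
    (∀ j, IsL2Atom (dunklMeasure Rp k) (a j) (c j) (r j)) ∧
      IsAtomicDecomp (dunklMeasure Rp k) f lam a ∧
      MemH1 (dunklMeasure Rp k) f ∧
      H1norm (dunklMeasure Rp k) f ≤ ∑' j, lam j ∧
      ∑' j, lam j ≤ Real.sqrt (dunklDk Rp k / (2 * dunklGamma Rp k + d)) := by
  set ν := dunklMeasure Rp k
  have : IsLocallyFiniteMeasure ν := isLocallyFiniteMeasure_dunklMeasure Rp k hk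
  have hfin j : ν (closedBall (c j) (r j)) ≠ ∞ := measure_closedBall_lt_top.ne
  have ha' j : a j = oscillationAtom ν h (c j) (r j) := by
    rw [ha, oscillationAtom, setAverage_eq, smul_eq_mul, measureReal_def]
  have hatom j : IsL2Atom ν (a j) (c j) (r j) :=
    ha' j ▸ isL2Atom_oscillationAtom hh hnorm.le (hfin j)
  have hdisj := pairwise_aedisjoint_dunklMeasure_of_subset_annuli Rp k hd hk hsub
  obtain ⟨hsum, hsum_le⟩ : Summable lam ∧
      ∑' j, lam j ≤ Real.sqrt (dunklDk Rp k / (2 * dunklGamma Rp k + d)) := by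
    rw [funext hlam]
    exact summable_and_tsum_rpow_half_dunklMeasure_le Rp k hd hk
      fun j x hx => mem_closedBall_zero_iff.2 (hsub j hx).2
  have hlam_abs j : |lam j| = lam j := abs_of_nonneg (hlam j ▸ by positivity)
  have hsum_abs : Summable fun j => |lam j| := by simpa only [hlam_abs] using hsum
  have hL2 : ∑' j, eLpNorm (fun x => lam j * a j x) 2 ν ^ (2 : ℝ≥0∞).toReal ≠ ∞ := by
    simp only [hlam, ha', rpow_half_mul_oscillationAtom (hfin _) (hpos _)]
    exact ne_top_of_le_ne_top (by simp [hnorm]) (tsum_eLpNorm_indicator_sub_setAverage_sq_le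
      (fun _ => measurableSet_closedBall) hfin hdisj hh)
  obtain rfl : f = fun x => ∑' j, lam j * a j x := funext hf
  have hdec := isAtomicDecomp_tsum hatom hr hfin hpos hsum_abs hdisj hL2
  refine ⟨hatom, hdec, memH1_tsum hatom hr hfin hpos hsum_abs hdisj hL2, ?_, hsum_le⟩
  simpa only [hlam_abs] using H1norm_le_tsum_abs hdec

/-- Example: given `‖h‖_{L²(ν_k)} = 1` and closed balls `B_j` of positive measure contained in
the annuli `C_j = {4^{-(j+1)/(2γ+d)} ≤ ‖x‖ ≤ 4^{-j/(2γ+d)}}` (`j ≥ 1`), the functions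
`a_j = ν_k(B_j)^{-1/2}(h - Avg_{B_j} h) χ_{B_j}` are `L²_k`-atoms, the series
`f = ∑_j ν_k(B_j)^{1/2} a_j` converges in `L¹(ν_k) ∩ L²(ν_k)`, `f ∈ H¹_k(ℝ^d)` and
`‖f‖_{H¹_k} ≤ ∑_j ν_k(B_j)^{1/2} ≤ √(d_k/(2γ+d))`.
(The index `j : ℕ` below corresponds to the paper's index `j+1 ≥ 1`.) -/
theorem example_memH1_of_atoms_in_annuli {d : ℕ} (hd : 0 < d)
    (Rp : Finset (EuclideanSpace ℝ (Fin d))) (hRp : ∀ ξ ∈ Rp, ξ ≠ 0)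
    (k : EuclideanSpace ℝ (Fin d) → ℝ) (hk : ∀ ξ ∈ Rp, 0 ≤ k ξ)
    (h : EuclideanSpace ℝ (Fin d) → ℝ) (hh : MemLp h 2 (dunklMeasure Rp k))
    (hnorm : eLpNorm h 2 (dunklMeasure Rp k) = 1)
    (c : ℕ → EuclideanSpace ℝ (Fin d)) (r : ℕ → ℝ) (hr : ∀ j, 0 < r j)
    (hpos : ∀ j, 0 < (dunklMeasure Rp k) (closedBall (c j) (r j)))
    (hsub : ∀ j, closedBall (c j) (r j) ⊆
      {x : EuclideanSpace ℝ (Fin d) |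
        (4 : ℝ) ^ (-((j : ℝ) + 2) / (2 * dunklGamma Rp k + d)) ≤ ‖x‖ ∧
          ‖x‖ ≤ (4 : ℝ) ^ (-((j : ℝ) + 1) / (2 * dunklGamma Rp k + d))})
    (a : ℕ → EuclideanSpace ℝ (Fin d) → ℝ)
    (ha : ∀ j, a j = Set.indicator (closedBall (c j) (r j)) fun x =>
      ((dunklMeasure Rp k) (closedBall (c j) (r j))).toReal ^ (-(1 : ℝ)/2)
        * (h x - ((dunklMeasure Rp k) (closedBall (c j) (r j))).toReal⁻¹
            * ∫ y in closedBall (c j) (r j), h y ∂(dunklMeasure Rp k)))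
    (lam : ℕ → ℝ)
    (hlam : ∀ j, lam j = ((dunklMeasure Rp k) (closedBall (c j) (r j))).toReal ^ ((1 : ℝ)/2))
    (f : EuclideanSpace ℝ (Fin d) → ℝ)
    (hf : ∀ x, f x = ∑' j, lam j * a j x) :
    (∀ j, IsL2Atom (dunklMeasure Rp k) (a j) (c j) (r j)) ∧
      IsAtomicDecomp (dunklMeasure Rp k) f lam a ∧
      MemH1 (dunklMeasure Rp k) f ∧
      H1norm (dunklMeasure Rp k) f ≤ ∑' j, lam j ∧
      ∑' j, lam j ≤ Real.sqrt (dunklDk Rp k / (2 * dunklGamma Rp k + d)) :=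
  example_memH1_of_atoms_in_annuli_general hd Rp k hk h hh hnorm c r hr hpos hsub a ha lam hlam f hf
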